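/- arXiv:2101.07423 — 3 statements merged into one kernel-verified Lean document; each statement's English description precedes it below -/
import Mathlib

section
/- Let N ∈ ℕ, let f : {0,1}^N → ℝ be submodular, and let G : [0,1]^N → ℝ be its multilinear extension with ∇G(y)_i = G([y]_{+i}) − G([y]_{−i}). Then for every y ∈ [0,1]^N and every m ∈ ℝ^N with m ≥ 0 coordinatewise and y + m ∈ [0,1]^N, one has G(y + m) − G(y) ≤ ⟨m, ∇G(y)⟩ = ∑_{i=1}^N m_i (G([y]_{+i}) − G([y]_{−i})). -/
/-- The indicator vector of a subset `S` of `{1,…,N}`, viewed as a point of `{0,1}^N ⊆ ℝ^N`. -/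
noncomputable def ind {N : ℕ} (S : Finset (Fin N)) : Fin N → ℝ :=
  fun i => if i ∈ S then 1 else 0

/-- `∏_{i∈S} y_i ∏_{i∉S} (1 - y_i)`. -/
noncomputable def wt {N : ℕ} (y : Fin N → ℝ) (S : Finset (Fin N)) : ℝ :=
  (∏ i ∈ S, y i) * ∏ i ∈ Sᶜ, (1 - y i)

/-- The multilinear extension `G(y) = ∑_{x∈{0,1}^N} f(x) ∏_{i:x_i=1} y_i ∏_{i:x_i=0}(1-y_i)`. -/
noncomputable def mlext {N : ℕ} (f : (Fin N → ℝ) → ℝ) (y : Fin N → ℝ) : ℝ :=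
  ∑ S : Finset (Fin N), f (ind S) * wt y S

/-- `∇G(y)_i = G([y]_{+i}) - G([y]_{-i})`. -/
noncomputable def gradML {N : ℕ} (f : (Fin N → ℝ) → ℝ) (y : Fin N → ℝ) (i : Fin N) : ℝ :=
  mlext f (Function.update y i 1) - mlext f (Function.update y i 0)

variable {N : ℕ}

lemma wt_update_one_vanish (z : Fin N → ℝ) (p : Fin N) (S : Finset (Fin N)) (hp : p ∉ S) :
    wt (Function.update z p 1) S = 0 := by
  have : ∏ i ∈ Sᶜ, (1 - Function.update z p 1 i) = 0 :=
    Finset.prod_eq_zero (Finset.mem_compl.2 hp) (by simp)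
  simp [wt, this]

lemma wt_update_zero_vanish (z : Fin N → ℝ) (p : Fin N) (S : Finset (Fin N)) (hp : p ∈ S) :
    wt (Function.update z p 0) S = 0 := by
  have : ∏ i ∈ S, Function.update z p 0 i = 0 := Finset.prod_eq_zero hp (by simp)
  simp [wt, this]

lemma wt_update_one_mem (z : Fin N → ℝ) (p : Fin N) (S : Finset (Fin N)) (hp : p ∈ S) :
    wt (Function.update z p 1) S = (∏ k ∈ S.erase p, z k) * ∏ k ∈ Sᶜ, (1 - z k) := by
  unfold wt
  rw [Finset.prod_update_of_mem hp, one_mul, ← Finset.erase_eq]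
  congr 1
  exact Finset.prod_congr rfl fun k hk => by
    rw [Function.update_of_ne (by rintro rfl; exact (Finset.mem_compl.1 hk) hp)]

lemma wt_update_zero_notMem (z : Fin N → ℝ) (p : Fin N) (S : Finset (Fin N)) (hp : p ∉ S) :
    wt (Function.update z p 0) S = (∏ k ∈ S, z k) * ∏ k ∈ Sᶜ.erase p, (1 - z k) := by
  unfold wt
  have h1 : ∏ k ∈ S, Function.update z p 0 k = ∏ k ∈ S, z k :=
    Finset.prod_congr rfl fun k hk => by
      rw [Function.update_of_ne (by rintro rfl; exact hp hk)]
  have hpc : p ∈ Sᶜ := Finset.mem_compl.2 hp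
  have h2 : ∏ k ∈ Sᶜ, (1 - Function.update z p 0 k)
      = (1 - Function.update z p 0 p) * ∏ k ∈ Sᶜ.erase p, (1 - Function.update z p 0 k) :=
    (Finset.mul_prod_erase _ _ hpc).symm
  rw [h1, h2]
  simp only [Function.update_self, sub_zero, one_mul]
  congr 1
  exact Finset.prod_congr rfl fun k hk => by
    rw [Function.update_of_ne (Finset.ne_of_mem_erase hk)]

lemma wt_decomp (z : Fin N → ℝ) (j : Fin N) (S : Finset (Fin N)) :
    wt z S = z j * wt (Function.update z j 1) S + (1 - z j) * wt (Function.update z j 0) S := by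
  by_cases hj : j ∈ S
  · rw [wt_update_one_mem z j S hj, wt_update_zero_vanish z j S hj]
    unfold wt
    rw [← Finset.mul_prod_erase _ _ hj]
    ring
  · rw [wt_update_zero_notMem z j S hj, wt_update_one_vanish z j S hj]
    unfold wt
    rw [← Finset.mul_prod_erase _ _ (Finset.mem_compl.2 hj)]
    ring

lemma mlext_decomp (f : (Fin N → ℝ) → ℝ) (z : Fin N → ℝ) (j : Fin N) :
    mlext f z = z j * mlext f (Function.update z j 1)
      + (1 - z j) * mlext f (Function.update z j 0) := by
  unfold mlext
  rw [Finset.mul_sum, Finset.mul_sum, ← Finset.sum_add_distrib]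
  exact Finset.sum_congr rfl fun S _ => by rw [wt_decomp z j S]; ring

lemma mlext_update (f : (Fin N → ℝ) → ℝ) (z : Fin N → ℝ) (j : Fin N) (t : ℝ) :
    mlext f (Function.update z j t) = t * mlext f (Function.update z j 1)
      + (1 - t) * mlext f (Function.update z j 0) := by
  have := mlext_decomp f (Function.update z j t) j
  rwa [Function.update_idem, Function.update_idem, Function.update_self] at this

lemma sum_split (p : Fin N) (q : Finset (Fin N) → Prop) [DecidablePred q]
    (hq : ∀ S : Finset (Fin N), p ∉ S → (q (insert p S) ↔ q S))
    (F : Finset (Fin N) → ℝ) :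
    ∑ S ∈ Finset.univ.filter q, F S
      = ∑ S ∈ Finset.univ.filter (fun S => q S ∧ p ∉ S), (F S + F (insert p S)) := by
  classical
  have hsplit : ∑ S ∈ Finset.univ.filter q, F S
      = ∑ S ∈ Finset.univ.filter (fun S => q S ∧ p ∉ S), F S
        + ∑ S ∈ Finset.univ.filter (fun S => q S ∧ p ∈ S), F S := by
    rw [← Finset.sum_filter_add_sum_filter_not (Finset.univ.filter q) (fun S => p ∉ S) F,
      Finset.filter_filter, Finset.filter_filter]
    simp only [not_not]
  rw [hsplit, Finset.sum_add_distrib]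
  congr 1
  refine Finset.sum_nbij' (fun S => S.erase p) (fun S => insert p S) ?_ ?_ ?_ ?_ ?_
  · intro S hS
    simp only [Finset.mem_filter, Finset.mem_univ, true_and] at hS ⊢
    refine ⟨?_, Finset.notMem_erase _ _⟩
    rw [← Finset.insert_erase hS.2] at hS
    exact (hq _ (Finset.notMem_erase _ _)).1 hS.1
  · intro S hS
    simp only [Finset.mem_filter, Finset.mem_univ, true_and] at hS ⊢
    exact ⟨(hq _ hS.2).2 hS.1, Finset.mem_insert_self _ _⟩
  · intro S hS
    simp only [Finset.mem_filter, Finset.mem_univ, true_and] at hS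
    exact Finset.insert_erase hS.2
  · intro S hS
    simp only [Finset.mem_filter, Finset.mem_univ, true_and] at hS
    exact Finset.erase_insert hS.2
  · intro S hS
    simp only [Finset.mem_filter, Finset.mem_univ, true_and] at hS
    rw [Finset.insert_erase hS.2]

lemma prod_one_sub_erase (z : Fin N → ℝ) (p : Fin N) (c : ℝ) (A : Finset (Fin N)) (hp : p ∈ A) :
    ∏ k ∈ A, (1 - Function.update z p c k) = (1 - c) * ∏ k ∈ A.erase p, (1 - z k) := by
  rw [← Finset.mul_prod_erase _ _ hp, Function.update_self]
  congr 1
  exact Finset.prod_congr rfl fun k hk => by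
    rw [Function.update_of_ne (Finset.ne_of_mem_erase hk)]

lemma prod_one_sub_notMem (z : Fin N → ℝ) (p : Fin N) (c : ℝ) (A : Finset (Fin N)) (hp : p ∉ A) :
    ∏ k ∈ A, (1 - Function.update z p c k) = ∏ k ∈ A, (1 - z k) :=
  Finset.prod_congr rfl fun k hk => by
    rw [Function.update_of_ne (by rintro rfl; exact hp hk)]

section evals
variable (z : Fin N → ℝ) {i j : Fin N} {T : Finset (Fin N)}

lemma ev00 (hij : i ≠ j) (hiT : i ∉ T) (hjT : j ∉ T) :
    wt (Function.update (Function.update z j 0) i 0) T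
      = (∏ k ∈ T, z k) * ∏ k ∈ (Tᶜ.erase i).erase j, (1 - z k) := by
  rw [wt_update_zero_notMem _ _ _ hiT, Finset.prod_update_of_notMem hjT]
  congr 1
  have hj' : j ∈ Tᶜ.erase i := Finset.mem_erase.2 ⟨hij.symm, Finset.mem_compl.2 hjT⟩
  rw [prod_one_sub_erase z j 0 _ hj']
  ring

lemma ev10 (hij : i ≠ j) (hiT : i ∉ T) (hjT : j ∉ T) :
    wt (Function.update (Function.update z j 0) i 1) (insert i T)
      = (∏ k ∈ T, z k) * ∏ k ∈ (Tᶜ.erase i).erase j, (1 - z k) := by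
  rw [wt_update_one_mem _ _ _ (Finset.mem_insert_self i T), Finset.erase_insert hiT,
    Finset.prod_update_of_notMem hjT, Finset.compl_insert]
  congr 1
  have hj' : j ∈ Tᶜ.erase i := Finset.mem_erase.2 ⟨hij.symm, Finset.mem_compl.2 hjT⟩
  rw [prod_one_sub_erase z j 0 _ hj']
  ring

lemma ev01 (hij : i ≠ j) (hiT : i ∉ T) (hjT : j ∉ T) :
    wt (Function.update (Function.update z j 1) i 0) (insert j T)
      = (∏ k ∈ T, z k) * ∏ k ∈ (Tᶜ.erase i).erase j, (1 - z k) := by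
  rw [Function.update_comm hij.symm, wt_update_one_mem _ _ _ (Finset.mem_insert_self j T),
    Finset.erase_insert hjT, Finset.prod_update_of_notMem hiT, Finset.compl_insert]
  congr 1
  have hi' : i ∈ Tᶜ.erase j := Finset.mem_erase.2 ⟨hij, Finset.mem_compl.2 hiT⟩
  rw [prod_one_sub_erase z i 0 _ hi', Finset.erase_right_comm]
  ring

lemma ev11 (hij : i ≠ j) (hiT : i ∉ T) (hjT : j ∉ T) :
    wt (Function.update (Function.update z j 1) i 1) (insert i (insert j T))
      = (∏ k ∈ T, z k) * ∏ k ∈ (Tᶜ.erase i).erase j, (1 - z k) := by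
  have hiT' : i ∉ insert j T := by
    simp only [Finset.mem_insert]
    rintro (rfl | h) <;> [exact hij rfl; exact hiT h]
  rw [wt_update_one_mem _ _ _ (Finset.mem_insert_self i _), Finset.erase_insert hiT',
    Finset.prod_update_of_mem (Finset.mem_insert_self j T), one_mul, ← Finset.erase_eq,
    Finset.erase_insert hjT, Finset.compl_insert, Finset.compl_insert]
  congr 1
  rw [prod_one_sub_notMem z j 1 _ (by simp), Finset.erase_right_comm]

end evals

lemma ind_insert (i : Fin N) (T : Finset (Fin N)) :
    Function.update (ind T) i 1 = ind (insert i T) := by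
  funext k
  by_cases hk : k = i
  · subst hk; simp [ind]
  · rw [Function.update_of_ne hk]
    simp only [ind, Finset.mem_insert]
    by_cases h : k ∈ T <;> simp [h, hk]

lemma gradML_cross (f : (Fin N → ℝ) → ℝ)
    (hsub : ∀ x x' : Fin N → ℝ, (∀ i, x i = 0 ∨ x i = 1) → (∀ i, x' i = 0 ∨ x' i = 1) →
      (∀ i, x i ≤ x' i) → ∀ i : Fin N, x' i = 0 →
      f (Function.update x' i 1) - f x' ≤ f (Function.update x i 1) - f x)
    (z : Fin N → ℝ) (hz : ∀ k, z k ∈ Set.Icc (0:ℝ) 1) (i j : Fin N) (hij : i ≠ j) :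
    gradML f (Function.update z j 1) i ≤ gradML f (Function.update z j 0) i := by
  classical
  set g : Finset (Fin N) → ℝ := fun S => f (ind S) *
    (wt (Function.update (Function.update z j 1) i 1) S
      - wt (Function.update (Function.update z j 1) i 0) S
      - (wt (Function.update (Function.update z j 0) i 1) S
        - wt (Function.update (Function.update z j 0) i 0) S)) with hg
  have hE : gradML f (Function.update z j 1) i - gradML f (Function.update z j 0) i
      = ∑ S : Finset (Fin N), g S := by
    unfold gradML mlext
    rw [← Finset.sum_sub_distrib, ← Finset.sum_sub_distrib, ← Finset.sum_sub_distrib]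
    exact Finset.sum_congr rfl fun S _ => by rw [hg]; ring
  have h1 : ∑ S : Finset (Fin N), g S
      = ∑ S ∈ Finset.univ.filter (fun S => i ∉ S), (g S + g (insert i S)) := by
    have := sum_split i (fun _ => True) (by simp) g
    simpa using this
  have h2 : ∑ S ∈ Finset.univ.filter (fun S => i ∉ S), (g S + g (insert i S))
      = ∑ T ∈ Finset.univ.filter (fun T => i ∉ T ∧ j ∉ T),
          ((g T + g (insert i T)) + (g (insert j T) + g (insert i (insert j T)))) := by
    exact sum_split j (fun S => i ∉ S)
      (fun S hj => by simp [Finset.mem_insert, hij]) (fun S => g S + g (insert i S))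
  have hterm : ∀ T ∈ Finset.univ.filter (fun T : Finset (Fin N) => i ∉ T ∧ j ∉ T),
      (g T + g (insert i T)) + (g (insert j T) + g (insert i (insert j T))) ≤ 0 := by
    intro T hT
    simp only [Finset.mem_filter, Finset.mem_univ, true_and] at hT
    obtain ⟨hiT, hjT⟩ := hT
    have hiT' : i ∉ insert j T := by
      simp only [Finset.mem_insert]
      rintro (rfl | h) <;> [exact hij rfl; exact hiT h]
    have hjT' : j ∉ insert i T := by
      simp only [Finset.mem_insert]
      rintro (rfl | h) <;> [exact hij rfl; exact hjT h]
    have hij2 : i ∈ insert i (insert j T) := Finset.mem_insert_self _ _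
    have hji2 : j ∈ insert i (insert j T) :=
      Finset.mem_insert_of_mem (Finset.mem_insert_self _ _)
    set W : ℝ := (∏ k ∈ T, z k) * ∏ k ∈ (Tᶜ.erase i).erase j, (1 - z k) with hW
    have hWnn : 0 ≤ W := mul_nonneg
      (Finset.prod_nonneg fun k _ => (hz k).1)
      (Finset.prod_nonneg fun k _ => by linarith [(hz k).2])
    -- evaluate g at the four sets
    have e1 : g T = f (ind T) * W := by
      rw [hg]
      simp only
      rw [wt_update_one_vanish _ _ _ hiT,
        Function.update_comm (Ne.symm hij : j ≠ i) (1:ℝ) (0:ℝ) z,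
        wt_update_one_vanish _ _ _ hjT,
        wt_update_one_vanish _ _ _ hiT, ev00 z hij hiT hjT]
      ring
    have e2 : g (insert i T) = -(f (ind (insert i T)) * W) := by
      rw [hg]
      simp only
      rw [Function.update_comm (Ne.symm hij : j ≠ i) (1:ℝ) (1:ℝ) z,
        wt_update_one_vanish _ _ _ hjT',
        wt_update_zero_vanish (Function.update z j 1) _ _ (Finset.mem_insert_self i T),
        wt_update_zero_vanish (Function.update z j 0) _ _ (Finset.mem_insert_self i T),
        ev10 z hij hiT hjT]
      ring
    have e3 : g (insert j T) = -(f (ind (insert j T)) * W) := by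
      rw [hg]
      simp only
      rw [wt_update_one_vanish _ _ _ hiT', ev01 z hij hiT hjT,
        wt_update_one_vanish _ _ _ hiT',
        Function.update_comm (Ne.symm hij : j ≠ i) (0:ℝ) (0:ℝ) z,
        wt_update_zero_vanish _ _ _ (Finset.mem_insert_self j T)]
      ring
    have e4 : g (insert i (insert j T)) = f (ind (insert i (insert j T))) * W := by
      rw [hg]
      simp only
      rw [ev11 z hij hiT hjT,
        wt_update_zero_vanish _ _ _ hij2,
        Function.update_comm (Ne.symm hij : j ≠ i) (0:ℝ) (1:ℝ) z,
        wt_update_zero_vanish _ _ _ hji2,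
        wt_update_zero_vanish _ _ _ hij2]
      ring
    rw [e1, e2, e3, e4]
    have hmono : ∀ k, ind T k ≤ ind (insert j T) k := by
      intro k
      by_cases h2 : k = j
      · subst h2; simp [ind, hjT]
      · simp [ind, Finset.mem_insert, h2]
    have hbin : ∀ (S : Finset (Fin N)) (k : Fin N), ind S k = 0 ∨ ind S k = 1 := by
      intro S k
      by_cases h : k ∈ S <;> simp [ind, h]
    have hx'i : ind (insert j T) i = 0 := by simp [ind, hiT']
    have := hsub (ind T) (ind (insert j T)) (hbin T) (hbin _) hmono i hx'i
    rw [ind_insert, ind_insert] at this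
    nlinarith [hWnn, this]
  have : gradML f (Function.update z j 1) i - gradML f (Function.update z j 0) i ≤ 0 := by
    rw [hE, h1, h2]
    exact Finset.sum_nonpos hterm
  linarith

lemma gradML_update_affine (f : (Fin N → ℝ) → ℝ) (z : Fin N → ℝ) {i j : Fin N} (hij : i ≠ j)
    (t : ℝ) :
    gradML f (Function.update z j t) i = t * gradML f (Function.update z j 1) i
      + (1 - t) * gradML f (Function.update z j 0) i := by
  unfold gradML
  rw [Function.update_comm (Ne.symm hij : j ≠ i) t (1:ℝ) z,
    Function.update_comm (Ne.symm hij : j ≠ i) t (0:ℝ) z,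
    mlext_update f (Function.update z i 1) j t, mlext_update f (Function.update z i 0) j t,
    Function.update_comm (hij : i ≠ j) (1:ℝ) (1:ℝ) z,
    Function.update_comm (hij : i ≠ j) (1:ℝ) (0:ℝ) z,
    Function.update_comm (hij : i ≠ j) (0:ℝ) (1:ℝ) z,
    Function.update_comm (hij : i ≠ j) (0:ℝ) (0:ℝ) z]
  ring

lemma gradML_mono_coord (f : (Fin N → ℝ) → ℝ)
    (hsub : ∀ x x' : Fin N → ℝ, (∀ i, x i = 0 ∨ x i = 1) → (∀ i, x' i = 0 ∨ x' i = 1) →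
      (∀ i, x i ≤ x' i) → ∀ i : Fin N, x' i = 0 →
      f (Function.update x' i 1) - f x' ≤ f (Function.update x i 1) - f x)
    (z : Fin N → ℝ) (hz : ∀ k, z k ∈ Set.Icc (0:ℝ) 1) {i j : Fin N} (hij : i ≠ j)
    {s t : ℝ} (hst : s ≤ t) :
    gradML f (Function.update z j t) i ≤ gradML f (Function.update z j s) i := by
  rw [gradML_update_affine f z hij t, gradML_update_affine f z hij s]
  have := gradML_cross f hsub z hz i j hij
  nlinarith [this, hst]

/-- if `f` is submodular on `{0,1}^N`, then for every `y ∈ [0,1]^N` and every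
`m ≥ 0` with `y + m ∈ [0,1]^N`, one has
`G(y+m) - G(y) ≤ ⟨m, ∇G(y)⟩ = ∑_i m_i (G([y]_{+i}) - G([y]_{-i}))`. -/
theorem mlext_concave_direction_bound {N : ℕ} (f : (Fin N → ℝ) → ℝ)
    (hsub : ∀ x x' : Fin N → ℝ, (∀ i, x i = 0 ∨ x i = 1) → (∀ i, x' i = 0 ∨ x' i = 1) →
      (∀ i, x i ≤ x' i) → ∀ i : Fin N, x' i = 0 →
      f (Function.update x' i 1) - f x' ≤ f (Function.update x i 1) - f x)
    (y : Fin N → ℝ) (hy : ∀ i, y i ∈ Set.Icc (0 : ℝ) 1)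
    (m : Fin N → ℝ) (hm : ∀ i, 0 ≤ m i)
    (hym : ∀ i, y i + m i ∈ Set.Icc (0 : ℝ) 1) :
    mlext f (fun i => y i + m i) - mlext f y ≤ ∑ i : Fin N, m i * gradML f y i := by
  classical
  set zs : ℕ → Fin N → ℝ := fun n i => if (i : ℕ) < n then y i + m i else y i with hzs
  have hzs0 : zs 0 = y := by funext i; simp [hzs]
  have hzsN : zs N = fun i => y i + m i := by
    funext i; simp [hzs, i.isLt]
  have hbox : ∀ n k, zs n k ∈ Set.Icc (0:ℝ) 1 := by
    intro n k
    by_cases h : (k : ℕ) < n <;> simp only [hzs, h, if_true, if_false]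
    · exact hym k
    · exact hy k
  have hcoord : ∀ (k : ℕ) (hk : k < N), zs k ⟨k, hk⟩ = y ⟨k, hk⟩ := by
    intro k hk; simp [hzs]
  have hstep : ∀ (k : ℕ) (hk : k < N),
      zs (k + 1) = Function.update (zs k) ⟨k, hk⟩ (y ⟨k, hk⟩ + m ⟨k, hk⟩) := by
    intro k hk
    funext i
    by_cases hik : i = (⟨k, hk⟩ : Fin N)
    · subst hik; simp [hzs]
    · rw [Function.update_of_ne hik]
      have hne : (i : ℕ) ≠ k := fun h => hik (Fin.ext h)
      have : ((i : ℕ) < k + 1) = ((i : ℕ) < k) := by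
        simp only [eq_iff_iff, Nat.lt_succ_iff]
        exact ⟨fun h => lt_of_le_of_ne h hne, le_of_lt⟩
      simp only [hzs, this]
  have hbase : ∀ (k : ℕ) (hk : k < N),
      zs k = Function.update (zs k) ⟨k, hk⟩ (y ⟨k, hk⟩) := by
    intro k hk
    rw [← hcoord k hk, Function.update_eq_self]
  -- per-step equality
  have hdiff : ∀ (k : ℕ) (hk : k < N),
      mlext f (zs (k + 1)) - mlext f (zs k)
        = m ⟨k, hk⟩ * gradML f (zs k) ⟨k, hk⟩ := by
    intro k hk
    rw [hstep k hk, mlext_update f (zs k) ⟨k, hk⟩ (y ⟨k, hk⟩ + m ⟨k, hk⟩),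
      mlext_decomp f (zs k) ⟨k, hk⟩, hcoord k hk]
    unfold gradML
    ring
  -- monotonicity of gradient along the path
  have hmono : ∀ n, ∀ i : Fin N, n ≤ (i : ℕ) → gradML f (zs n) i ≤ gradML f y i := by
    intro n
    induction n with
    | zero => intro i _; rw [hzs0]
    | succ k ih =>
      intro i hi
      have hk : k < N := by have := i.isLt; omega
      have hik : i ≠ (⟨k, hk⟩ : Fin N) := by
        intro h
        rw [h] at hi
        exact Nat.not_succ_le_self k hi
      calc gradML f (zs (k + 1)) i
          = gradML f (Function.update (zs k) ⟨k, hk⟩ (y ⟨k, hk⟩ + m ⟨k, hk⟩)) i := by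
            rw [← hstep k hk]
        _ ≤ gradML f (Function.update (zs k) ⟨k, hk⟩ (y ⟨k, hk⟩)) i :=
            gradML_mono_coord f hsub (zs k) (hbox k) hik
              (by linarith [hm (⟨k, hk⟩ : Fin N)])
        _ = gradML f (zs k) i := by rw [← hbase k hk]
        _ ≤ gradML f y i := ih i (le_of_lt (Nat.lt_of_succ_le hi))
  -- telescoping
  have htel : mlext f (zs N) - mlext f (zs 0)
      = ∑ k ∈ Finset.range N, (mlext f (zs (k + 1)) - mlext f (zs k)) :=
    (Finset.sum_range_sub (fun n => mlext f (zs n)) N).symm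
  rw [← hzsN, ← hzs0, htel]
  have hbound : ∀ k ∈ Finset.range N,
      mlext f (zs (k + 1)) - mlext f (zs k)
        ≤ if h : k < N then m ⟨k, h⟩ * gradML f y ⟨k, h⟩ else 0 := by
    intro k hk
    have hk' : k < N := Finset.mem_range.1 hk
    rw [dif_pos hk', hdiff k hk']
    exact mul_le_mul_of_nonneg_left (hmono k ⟨k, hk'⟩ (le_refl k)) (hm _)
  calc ∑ k ∈ Finset.range N, (mlext f (zs (k + 1)) - mlext f (zs k))
      ≤ ∑ k ∈ Finset.range N, (if h : k < N then m ⟨k, h⟩ * gradML f y ⟨k, h⟩ else 0) :=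
        Finset.sum_le_sum hbound
    _ = ∑ i : Fin N, m i * gradML f y i := by
        rw [Finset.sum_range fun k => if h : k < N then m ⟨k, h⟩ * gradML f y ⟨k, h⟩ else 0]
        exact Finset.sum_congr rfl fun i _ => by rw [dif_pos i.isLt]
end

section
/- Let N, M, L ∈ ℕ with L ≥ 1, let P_1,…,P_M be a partition of {1,…,N}, and let r ∈ ℝ^N with r_i ≥ 0 and ∑_{i=1}^N r_i = 1. Define g_j(x) = ∑_{i∈P_j} r_i x_i, the diversity reward objective f(x) = ∑_{j=1}^M log(1 + g_j(x)), and its polynomial estimator f̂_L(x) = ∑_{j=1}^M ĥ_L(g_j(x)), where ĥ_L(s) = log(3/2) + ∑_{ℓ=1}^L ((−1)^{ℓ−1}/ℓ)(2/3)^ℓ (s−1/2)^ℓ is the degree-L Taylor polynomial of log(1+s) around 1/2. Let G and Ĝ_L be the multilinear extensions of f and f̂_L restricted to {0,1}^N, with gradients ∇G(y)_i = G([y]_{+i}) − G([y]_{−i}) and similarly for Ĝ_L. Then for every y ∈ [0,1]^N, ‖∇G(y) − ∇Ĝ_L(y)‖₂ ≤ M√N / ((L+1) · 2^L). -/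
/-- Euclidean norm on `ℝ^N`. -/
noncomputable def norm2 {N : ℕ} (v : Fin N → ℝ) : ℝ :=
  Real.sqrt (∑ i, v i ^ 2)

lemma geom_third (L n : ℕ) : ∑ i ∈ Finset.Ico L n, (1/3:ℝ)^(i+1) ≤ (3/2) * (1/3:ℝ)^(L+1) := by
  rw [Finset.sum_Ico_eq_sum_range]
  have : ∀ i, (1/3:ℝ)^(L + i + 1) = (1/3:ℝ)^(L+1) * (1/3:ℝ)^i := by
    intro i; rw [← pow_add]; ring_nf
  simp only [this, ← Finset.mul_sum]
  have hg : ∑ i ∈ Finset.range (n - L), (1/3:ℝ)^i ≤ 3/2 := by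
    rw [geom_sum_eq (by norm_num)]
    have : (0:ℝ) ≤ (1/3:ℝ)^(n-L) := by positivity
    rw [div_le_iff_of_neg (by norm_num)]
    linarith
  calc (1/3:ℝ)^(L+1) * ∑ i ∈ Finset.range (n - L), (1/3:ℝ)^i
      ≤ (1/3:ℝ)^(L+1) * (3/2) := by
        exact mul_le_mul_of_nonneg_left hg (by positivity)
    _ = (3/2) * (1/3:ℝ)^(L+1) := by ring

lemma log_taylor_tail (L : ℕ) (hL : 1 ≤ L) (t : ℝ) (ht : |t| ≤ 1/3) :
    |Real.log (1 + t) - ∑ i ∈ Finset.range L, (-1 : ℝ) ^ i * t ^ (i+1) / (i+1)| ≤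
      1 / (((L : ℝ) + 1) * 2 ^ (L+1)) := by
  set C : ℝ := 1 / (((L : ℝ) + 1) * 2 ^ (L+1)) with hC
  have ht1 : |t| < 1 := lt_of_le_of_lt ht (by norm_num)
  have h23 : (2:ℝ)/3 ≤ 1 - |t| := by linarith
  have hL1 : (0:ℝ) < (L:ℝ) + 1 := by positivity
  have key : ∀ n, L ≤ n →
      |Real.log (1 + t) - ∑ i ∈ Finset.range L, (-1 : ℝ) ^ i * t ^ (i+1) / (i+1)|
        ≤ (3/2) * (1/3) ^ (n+1) + C := by
    intro n hn
    have hx : |(-t)| < 1 := by rwa [abs_neg]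
    have h1 := Real.abs_log_sub_add_sum_range_le hx n
    rw [abs_neg] at h1
    have hs : ∑ i ∈ Finset.range n, (-t) ^ (i + 1) / (↑i + 1)
        = - ∑ i ∈ Finset.range n, (-1 : ℝ) ^ i * t ^ (i+1) / (i+1) := by
      rw [← Finset.sum_neg_distrib]
      refine Finset.sum_congr rfl fun i _ => ?_
      rw [neg_pow]; ring
    rw [hs, show (1 - -t) = 1 + t by ring] at h1
    have h1' : |Real.log (1 + t) - ∑ i ∈ Finset.range n, (-1 : ℝ) ^ i * t ^ (i+1) / (i+1)|
        ≤ (3/2) * (1/3) ^ (n+1) := by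
      have e : -(∑ i ∈ Finset.range n, (-1 : ℝ) ^ i * t ^ (i+1) / (i+1)) + Real.log (1 + t)
          = Real.log (1+t) - ∑ i ∈ Finset.range n, (-1 : ℝ) ^ i * t ^ (i+1) / (i+1) := by ring
      rw [e] at h1
      refine h1.trans ?_
      have hnum : |t| ^ (n+1) ≤ (1/3 : ℝ) ^ (n+1) :=
        pow_le_pow_left₀ (abs_nonneg t) ht _
      calc |t| ^ (n+1) / (1 - |t|) ≤ (1/3:ℝ)^(n+1) / (2/3) :=
            div_le_div₀ (by positivity) hnum (by norm_num) h23
        _ = (3/2) * (1/3)^(n+1) := by ring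
    have hdiff : |(∑ i ∈ Finset.range n, (-1 : ℝ) ^ i * t ^ (i+1) / (i+1))
        - ∑ i ∈ Finset.range L, (-1 : ℝ) ^ i * t ^ (i+1) / (i+1)| ≤ C := by
      have e := Finset.sum_range_add_sum_Ico
        (fun i => (-1 : ℝ) ^ i * t ^ (i+1) / (i+1)) hn
      have e' : (∑ i ∈ Finset.range n, (-1 : ℝ) ^ i * t ^ (i+1) / (i+1))
          - ∑ i ∈ Finset.range L, (-1 : ℝ) ^ i * t ^ (i+1) / (i+1)
          = ∑ i ∈ Finset.Ico L n, (-1 : ℝ) ^ i * t ^ (i+1) / (i+1) := by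
        rw [← e]; ring
      rw [e']
      calc |∑ i ∈ Finset.Ico L n, (-1 : ℝ) ^ i * t ^ (i+1) / (i+1)|
          ≤ ∑ i ∈ Finset.Ico L n, |(-1 : ℝ) ^ i * t ^ (i+1) / (i+1)| :=
            Finset.abs_sum_le_sum_abs _ _
        _ ≤ ∑ i ∈ Finset.Ico L n, (1/3:ℝ)^(i+1) / ((L:ℝ)+1) := by
            refine Finset.sum_le_sum fun i hi => ?_
            have hiL : L ≤ i := (Finset.mem_Ico.mp hi).1
            have hiL' : (L:ℝ) + 1 ≤ (i:ℝ) + 1 := by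
              have := (Nat.cast_le (α := ℝ)).mpr hiL; linarith
            rw [abs_div, abs_mul, abs_pow, abs_pow, abs_neg, abs_one, one_pow, one_mul,
              abs_of_pos (by positivity : (0:ℝ) < (i:ℝ)+1)]
            exact div_le_div₀ (by positivity) (pow_le_pow_left₀ (abs_nonneg t) ht _)
              hL1 hiL'
        _ = (∑ i ∈ Finset.Ico L n, (1/3:ℝ)^(i+1)) / ((L:ℝ)+1) := by
            rw [Finset.sum_div]
        _ ≤ ((3/2) * (1/3:ℝ)^(L+1)) / ((L:ℝ)+1) :=
            div_le_div₀ (by positivity) (geom_third L n) hL1 le_rfl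
        _ ≤ C := by
            rw [hC]
            have h2 : (2:ℝ)^(L+1) ≤ 2 * 3^L := by
              rw [pow_succ]
              have : (2:ℝ)^L ≤ 3^L := pow_le_pow_left₀ (by norm_num) (by norm_num) L
              linarith
            have e2 : ((3:ℝ)/2) * (1/3:ℝ)^(L+1) = 1 / (2 * 3^L) := by
              rw [div_pow, one_pow]; field_simp; ring
            rw [e2, div_div, one_div, one_div]
            apply inv_anti₀ (by positivity)
            calc ((L:ℝ)+1) * 2^(L+1) ≤ ((L:ℝ)+1) * (2 * 3^L) :=
                  mul_le_mul_of_nonneg_left h2 (le_of_lt hL1)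
              _ = 2 * 3^L * ((L:ℝ)+1) := by ring
    calc |Real.log (1 + t) - ∑ i ∈ Finset.range L, (-1 : ℝ) ^ i * t ^ (i+1) / (i+1)|
        ≤ |Real.log (1+t) - ∑ i ∈ Finset.range n, (-1 : ℝ) ^ i * t ^ (i+1) / (i+1)|
          + |(∑ i ∈ Finset.range n, (-1 : ℝ) ^ i * t ^ (i+1) / (i+1))
            - ∑ i ∈ Finset.range L, (-1 : ℝ) ^ i * t ^ (i+1) / (i+1)| := by
          have e3 : Real.log (1+t) - ∑ i ∈ Finset.range L, (-1 : ℝ) ^ i * t ^ (i+1) / (i+1)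
            = (Real.log (1+t) - ∑ i ∈ Finset.range n, (-1 : ℝ) ^ i * t ^ (i+1) / (i+1))
              + ((∑ i ∈ Finset.range n, (-1 : ℝ) ^ i * t ^ (i+1) / (i+1))
                - ∑ i ∈ Finset.range L, (-1 : ℝ) ^ i * t ^ (i+1) / (i+1)) := by ring
          rw [e3]; exact abs_add_le _ _
      _ ≤ (3/2) * (1/3) ^ (n+1) + C := add_le_add h1' hdiff
  have htend : Filter.Tendsto (fun n : ℕ => (3/2 : ℝ) * (1/3) ^ (n+1) + C)
      Filter.atTop (nhds C) := by
    have h0 : Filter.Tendsto (fun n : ℕ => (1/3 : ℝ) ^ (n+1)) Filter.atTop (nhds 0) :=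
      (tendsto_pow_atTop_nhds_zero_of_lt_one (by norm_num : (0:ℝ) ≤ 1/3)
        (by norm_num)).comp (Filter.tendsto_add_atTop_nat 1)
    have := (h0.const_mul (3/2 : ℝ)).add_const C
    simpa using this
  refine ge_of_tendsto htend ?_
  filter_upwards [Filter.eventually_ge_atTop L] with n hn
  exact key n hn
lemma hhat_bound (L : ℕ) (hL : 1 ≤ L) (s : ℝ) (hs0 : 0 ≤ s) (hs1 : s ≤ 1) :
    |Real.log (1 + s) - (Real.log (3/2) +
      ∑ ℓ ∈ Finset.Icc 1 L, ((-1:ℝ)^(ℓ-1)/(ℓ:ℝ)) * (2/3)^ℓ * (s - 1/2)^ℓ)| ≤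
      1 / (((L:ℝ)+1) * 2^(L+1)) := by
  set t : ℝ := 2/3 * (s - 1/2) with htdef
  have ht : |t| ≤ 1/3 := by
    rw [abs_le]; constructor <;> (rw [htdef]; linarith)
  have ht0 : (0:ℝ) < 1 + t := by
    have := (abs_le.mp ht).1; linarith
  have hlog : Real.log (1+s) = Real.log (3/2) + Real.log (1+t) := by
    have e : (1:ℝ)+s = (3/2)*(1+t) := by rw [htdef]; ring
    rw [e, Real.log_mul (by norm_num) (by linarith)]
  have hsum : ∑ ℓ ∈ Finset.Icc 1 L, ((-1:ℝ)^(ℓ-1)/(ℓ:ℝ)) * (2/3)^ℓ * (s - 1/2)^ℓ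
      = ∑ i ∈ Finset.range L, (-1 : ℝ) ^ i * t ^ (i+1) / (i+1) := by
    rw [← Finset.Ico_add_one_right_eq_Icc, Finset.sum_Ico_eq_sum_range]
    refine Finset.sum_congr rfl fun i _ => ?_
    have e1 : 1 + i - 1 = i := by omega
    rw [e1, htdef]
    have e2 : (2/3 * (s - 1/2)) ^ (i+1) = (2/3:ℝ)^(i+1) * (s-1/2)^(i+1) := by
      rw [mul_pow]
    rw [e2]
    push_cast
    have e3 : (2/3:ℝ)^(1+i) = (2/3:ℝ)^(i+1) := by ring_nf
    have e4 : (s-1/2)^(1+i) = (s-1/2)^(i+1) := by ring_nf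
    rw [e3, e4]
    ring
  rw [hlog, hsum]
  have := log_taylor_tail L hL t ht
  calc |Real.log (3/2) + Real.log (1+t) -
        (Real.log (3/2) + ∑ i ∈ Finset.range L, (-1 : ℝ) ^ i * t ^ (i+1) / (i+1))|
      = |Real.log (1+t) - ∑ i ∈ Finset.range L, (-1 : ℝ) ^ i * t ^ (i+1) / (i+1)| := by
        rw [add_sub_add_left_eq_sub]
    _ ≤ _ := this

lemma sum_wt_eq_one {N : ℕ} (z : Fin N → ℝ) : ∑ S : Finset (Fin N), wt z S = 1 := by
  calc ∑ S : Finset (Fin N), wt z S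
      = ∑ S ∈ Finset.univ.powerset, (∏ i ∈ S, z i) * ∏ i ∈ Finset.univ \ S, (1 - z i) := by
        rw [Finset.powerset_univ]
        refine Finset.sum_congr rfl fun S _ => ?_
        rw [wt, Finset.compl_eq_univ_sdiff]
    _ = ∏ i : Fin N, (z i + (1 - z i)) := (Finset.prod_add _ _ _).symm
    _ = 1 := by simp

lemma wt_nonneg {N : ℕ} (z : Fin N → ℝ) (hz : ∀ i, z i ∈ Set.Icc (0:ℝ) 1)
    (S : Finset (Fin N)) : 0 ≤ wt z S := by
  rw [wt]
  apply mul_nonneg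
  · exact Finset.prod_nonneg fun i _ => (hz i).1
  · exact Finset.prod_nonneg fun i _ => by linarith [(hz i).2]

lemma abs_mlext_sub_le {N : ℕ} (f g : (Fin N → ℝ) → ℝ) (z : Fin N → ℝ)
    (hz : ∀ i, z i ∈ Set.Icc (0:ℝ) 1) (C : ℝ)
    (hC : ∀ S : Finset (Fin N), |f (ind S) - g (ind S)| ≤ C) :
    |mlext f z - mlext g z| ≤ C := by
  have e : mlext f z - mlext g z
      = ∑ S : Finset (Fin N), (f (ind S) - g (ind S)) * wt z S := by
    rw [mlext, mlext, ← Finset.sum_sub_distrib]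
    refine Finset.sum_congr rfl fun S _ => ?_
    ring
  rw [e]
  calc |∑ S : Finset (Fin N), (f (ind S) - g (ind S)) * wt z S|
      ≤ ∑ S : Finset (Fin N), |(f (ind S) - g (ind S)) * wt z S| :=
        Finset.abs_sum_le_sum_abs _ _
    _ ≤ ∑ S : Finset (Fin N), C * wt z S := by
        refine Finset.sum_le_sum fun S _ => ?_
        rw [abs_mul, abs_of_nonneg (wt_nonneg z hz S)]
        exact mul_le_mul_of_nonneg_right (hC S) (wt_nonneg z hz S)
    _ = C * ∑ S : Finset (Fin N), wt z S := (Finset.mul_sum _ _ _).symm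
    _ = C := by rw [sum_wt_eq_one]; ring

/-- for the data-summarization (diversity reward) objective
`f(x) = ∑_{j=1}^M log(1 + g_j(x))` with `g_j(x) = ∑_{i∈P_j} r_i x_i` over a partition
`P_1,…,P_M` of `{1,…,N}` and nonnegative weights `r` summing to `1`, and its polynomial
estimator `f̂_L(x) = ∑_{j=1}^M ĥ_L(g_j(x))` with `ĥ_L` the degree-`L` Taylor polynomial of
`log(1+s)` at `1/2`, the gradients of the multilinear extensions satisfy
`‖∇G(y) - ∇Ĝ_L(y)‖₂ ≤ M√N / ((L+1)·2^L)` for all `y ∈ [0,1]^N`. -/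
theorem summarization_bias_bound {N M : ℕ} (L : ℕ) (hL : 1 ≤ L)
    (P : Fin M → Finset (Fin N))
    (hdisj : ∀ j j' : Fin M, j ≠ j' → Disjoint (P j) (P j'))
    (hcover : ∀ i : Fin N, ∃ j, i ∈ P j)
    (r : Fin N → ℝ) (hr : ∀ i, 0 ≤ r i) (hrsum : ∑ i, r i = 1)
    (f fhat : (Fin N → ℝ) → ℝ)
    (hf : ∀ x : Fin N → ℝ, f x = ∑ j : Fin M, Real.log (1 + ∑ i ∈ P j, r i * x i))
    (hfhat : ∀ x : Fin N → ℝ, fhat x = ∑ j : Fin M, (Real.log (3 / 2) +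
      ∑ ℓ ∈ Finset.Icc 1 L, ((-1 : ℝ) ^ (ℓ - 1) / (ℓ : ℝ)) * (2 / 3) ^ ℓ *
        ((∑ i ∈ P j, r i * x i) - 1 / 2) ^ ℓ))
    (y : Fin N → ℝ) (hy : ∀ i, y i ∈ Set.Icc (0 : ℝ) 1) :
    norm2 (fun i => gradML f y i - gradML fhat y i) ≤
      (M : ℝ) * Real.sqrt (N : ℝ) / (((L : ℝ) + 1) * 2 ^ L) := by
  set ε : ℝ := 1 / (((L:ℝ)+1) * 2^(L+1)) with hε
  have hε0 : (0:ℝ) ≤ ε := by positivity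
  have hM0 : (0:ℝ) ≤ (M:ℝ) * ε := by positivity
  -- pointwise bound on |f - fhat| at vertices
  have hd : ∀ S : Finset (Fin N), |f (ind S) - fhat (ind S)| ≤ (M:ℝ) * ε := by
    intro S
    rw [hf, hfhat, ← Finset.sum_sub_distrib]
    calc |∑ j : Fin M, (Real.log (1 + ∑ i ∈ P j, r i * ind S i) -
            (Real.log (3 / 2) + ∑ ℓ ∈ Finset.Icc 1 L, ((-1 : ℝ) ^ (ℓ - 1) / (ℓ : ℝ)) *
              (2 / 3) ^ ℓ * ((∑ i ∈ P j, r i * ind S i) - 1 / 2) ^ ℓ))|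
        ≤ ∑ j : Fin M, |Real.log (1 + ∑ i ∈ P j, r i * ind S i) -
            (Real.log (3 / 2) + ∑ ℓ ∈ Finset.Icc 1 L, ((-1 : ℝ) ^ (ℓ - 1) / (ℓ : ℝ)) *
              (2 / 3) ^ ℓ * ((∑ i ∈ P j, r i * ind S i) - 1 / 2) ^ ℓ)| :=
          Finset.abs_sum_le_sum_abs _ _
      _ ≤ ∑ _j : Fin M, ε := by
          refine Finset.sum_le_sum fun j _ => ?_
          have hind : ∀ i, 0 ≤ ind S i ∧ ind S i ≤ 1 := by
            intro i; rw [ind]; by_cases h : i ∈ S <;> simp [h]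
          have hs0 : (0:ℝ) ≤ ∑ i ∈ P j, r i * ind S i :=
            Finset.sum_nonneg fun i _ => mul_nonneg (hr i) (hind i).1
          have hs1 : ∑ i ∈ P j, r i * ind S i ≤ 1 := by
            calc ∑ i ∈ P j, r i * ind S i ≤ ∑ i ∈ P j, r i :=
                  Finset.sum_le_sum fun i _ =>
                    mul_le_of_le_one_right (hr i) (hind i).2
              _ ≤ ∑ i, r i :=
                  Finset.sum_le_sum_of_subset_of_nonneg (Finset.subset_univ _)
                    (fun i _ _ => hr i)
              _ = 1 := hrsum
          exact hhat_bound L hL _ hs0 hs1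
      _ = (M:ℝ) * ε := by
          rw [Finset.sum_const, Finset.card_univ, Fintype.card_fin, nsmul_eq_mul]
  -- bound on the gradient coordinates
  have hupd : ∀ (c : ℝ), (0:ℝ) ≤ c → c ≤ 1 → ∀ i0 : Fin N,
      ∀ i, Function.update y i0 c i ∈ Set.Icc (0:ℝ) 1 := by
    intro c hc0 hc1 i0 i
    rcases eq_or_ne i i0 with h | h
    · subst h; rw [Function.update_self]; exact ⟨hc0, hc1⟩
    · rw [Function.update_of_ne h]; exact hy i
  have hgrad : ∀ i, |gradML f y i - gradML fhat y i| ≤ 2 * ((M:ℝ) * ε) := by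
    intro i
    rw [gradML, gradML]
    have h1 := abs_mlext_sub_le f fhat (Function.update y i 1)
      (hupd 1 (by norm_num) (by norm_num) i) ((M:ℝ)*ε) hd
    have h0 := abs_mlext_sub_le f fhat (Function.update y i 0)
      (hupd 0 (by norm_num) (by norm_num) i) ((M:ℝ)*ε) hd
    set a := mlext f (Function.update y i 1) - mlext fhat (Function.update y i 1) with ha
    set b := mlext f (Function.update y i 0) - mlext fhat (Function.update y i 0) with hb
    have e : mlext f (Function.update y i 1) - mlext f (Function.update y i 0) -
        (mlext fhat (Function.update y i 1) - mlext fhat (Function.update y i 0))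
        = a - b := by rw [ha, hb]; ring
    rw [e]
    calc |a - b| ≤ |a| + |b| := abs_sub _ _
      _ ≤ (M:ℝ)*ε + (M:ℝ)*ε := add_le_add h1 h0
      _ = 2 * ((M:ℝ)*ε) := by ring
  -- conclude
  rw [norm2]
  have hsum2 : ∑ i, (gradML f y i - gradML fhat y i)^2 ≤ (N:ℝ) * (2 * ((M:ℝ)*ε))^2 := by
    calc ∑ i, (gradML f y i - gradML fhat y i)^2
        ≤ ∑ _i : Fin N, (2 * ((M:ℝ)*ε))^2 := by
          refine Finset.sum_le_sum fun i _ => ?_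
          rw [← sq_abs]
          exact pow_le_pow_left₀ (abs_nonneg _) (hgrad i) 2
      _ = (N:ℝ) * (2 * ((M:ℝ)*ε))^2 := by
          rw [Finset.sum_const, Finset.card_univ, Fintype.card_fin, nsmul_eq_mul]
  have h2M : (0:ℝ) ≤ 2 * ((M:ℝ)*ε) := by positivity
  calc Real.sqrt (∑ i, (gradML f y i - gradML fhat y i)^2)
      ≤ Real.sqrt ((N:ℝ) * (2 * ((M:ℝ)*ε))^2) := Real.sqrt_le_sqrt hsum2
    _ = Real.sqrt (N:ℝ) * (2 * ((M:ℝ)*ε)) := by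
        rw [Real.sqrt_mul (Nat.cast_nonneg N), Real.sqrt_sq h2M]
    _ = (M : ℝ) * Real.sqrt (N : ℝ) / (((L : ℝ) + 1) * 2 ^ L) := by
        rw [hε, pow_succ]
        have hL0 : ((L:ℝ)+1) ≠ 0 := by positivity
        have h2L : ((2:ℝ)^L) ≠ 0 := by positivity
        field_simp
end

section
/- Let N ∈ ℕ and let w_1 ≥ w_2 ≥ … ≥ w_N ≥ 0 be real numbers, with the convention w_{N+1} = 0. Then for every x ∈ {0,1}^N, the maximum max({w_i : x_i = 1} ∪ {0}) equals the multilinear expression ∑_{ℓ=1}^N (w_ℓ − w_{ℓ+1}) · (1 − ∏_{k=1}^ℓ (1 − x_k)). -/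
lemma telescope_aux (w : ℕ → ℝ) : ∀ a b : ℕ, a ≤ b →
    ∑ ℓ ∈ Finset.Icc a b, (w ℓ - w (ℓ + 1)) = w a - w (b + 1) := by
  intro a b
  induction b with
  | zero => intro h; interval_cases a; simp
  | succ n ih =>
    intro h
    rcases Nat.lt_or_ge a (n + 1) with h' | h'
    · rw [Finset.sum_Icc_succ_top (by omega), ih (by omega)]; ring
    · have : a = n + 1 := le_antisymm h h'
      subst this; simp

/-- for weights `w_1 ≥ w_2 ≥ … ≥ w_N ≥ 0` with the convention `w_{N+1} = 0`,
and any `x ∈ {0,1}^N`, the maximum `max({w_i : x_i = 1} ∪ {0})` equals the multilinear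
expression `∑_{ℓ=1}^N (w_ℓ - w_{ℓ+1})(1 - ∏_{k=1}^ℓ (1 - x_k))`. -/
theorem facility_location_multilinear (N : ℕ) (w : ℕ → ℝ)
    (hsorted : ∀ i j : ℕ, 1 ≤ i → i ≤ j → j ≤ N → w j ≤ w i)
    (hnonneg : ∀ i, 1 ≤ i → i ≤ N → 0 ≤ w i)
    (hconv : w (N + 1) = 0)
    (x : ℕ → ℝ) (hx : ∀ i, 1 ≤ i → i ≤ N → x i = 0 ∨ x i = 1) :
    (insert (0 : ℝ) (((Finset.Icc 1 N).filter (fun i => x i = 1)).image w)).max'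
        (Finset.insert_nonempty _ _)
      = ∑ ℓ ∈ Finset.Icc 1 N, (w ℓ - w (ℓ + 1)) * (1 - ∏ k ∈ Finset.Icc 1 ℓ, (1 - x k)) := by
  by_cases hS : ((Finset.Icc 1 N).filter (fun i => x i = 1)).Nonempty
  · -- nonempty case
    set S := (Finset.Icc 1 N).filter (fun i => x i = 1) with hSdef
    set i0 := S.min' hS with hi0def
    have hi0S : i0 ∈ S := S.min'_mem hS
    have hi0mem : i0 ∈ Finset.Icc 1 N := (Finset.mem_filter.mp hi0S).1
    have hxi0 : x i0 = 1 := (Finset.mem_filter.mp hi0S).2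
    have hi01 : 1 ≤ i0 := (Finset.mem_Icc.mp hi0mem).1
    have hi0N : i0 ≤ N := (Finset.mem_Icc.mp hi0mem).2
    have hbelow : ∀ k, 1 ≤ k → k < i0 → x k = 0 := by
      intro k hk1 hki0
      rcases hx k hk1 (by omega) with h0 | h1
      · exact h0
      · exact absurd (S.min'_le k (Finset.mem_filter.mpr ⟨Finset.mem_Icc.mpr ⟨hk1, by omega⟩, h1⟩)) (by omega)
    -- LHS = w i0
    have hLHS : (insert (0 : ℝ) (S.image w)).max' (Finset.insert_nonempty _ _) = w i0 := by
      apply le_antisymm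
      · apply Finset.max'_le
        intro y hy
        rcases Finset.mem_insert.mp hy with rfl | hy
        · exact hnonneg i0 hi01 hi0N
        · obtain ⟨i, hiS, rfl⟩ := Finset.mem_image.mp hy
          have hi := Finset.mem_Icc.mp (Finset.mem_filter.mp hiS).1
          exact hsorted i0 i hi01 (S.min'_le i hiS) hi.2
      · exact Finset.le_max' _ _ (Finset.mem_insert.mpr (Or.inr (Finset.mem_image_of_mem w hi0S)))
    rw [hLHS]
    -- RHS: each term indicator
    have hterm : ∀ ℓ ∈ Finset.Icc 1 N,
        (w ℓ - w (ℓ + 1)) * (1 - ∏ k ∈ Finset.Icc 1 ℓ, (1 - x k))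
          = if i0 ≤ ℓ then w ℓ - w (ℓ + 1) else 0 := by
      intro ℓ hℓ
      have hℓ' := Finset.mem_Icc.mp hℓ
      by_cases hcase : i0 ≤ ℓ
      · rw [if_pos hcase]
        have : ∏ k ∈ Finset.Icc 1 ℓ, (1 - x k) = 0 :=
          Finset.prod_eq_zero (Finset.mem_Icc.mpr ⟨hi01, hcase⟩) (by rw [hxi0]; ring)
        rw [this]; ring
      · rw [if_neg hcase]
        have : ∏ k ∈ Finset.Icc 1 ℓ, (1 - x k) = 1 := by
          apply Finset.prod_eq_one
          intro k hk
          have hk' := Finset.mem_Icc.mp hk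
          rw [hbelow k hk'.1 (by omega)]; ring
        rw [this]; ring
    rw [Finset.sum_congr rfl hterm, Finset.sum_ite, Finset.sum_const_zero, add_zero]
    have hfilter : (Finset.Icc 1 N).filter (fun ℓ => i0 ≤ ℓ) = Finset.Icc i0 N := by
      ext ℓ
      simp only [Finset.mem_filter, Finset.mem_Icc]
      omega
    rw [hfilter, telescope_aux w i0 N hi0N, hconv, sub_zero]
  · -- empty case
    have hempty : (Finset.Icc 1 N).filter (fun i => x i = 1) = ∅ :=
      Finset.not_nonempty_iff_eq_empty.mp hS
    rw [hempty]
    have hx0 : ∀ i, 1 ≤ i → i ≤ N → x i = 0 := by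
      intro i h1 h2
      rcases hx i h1 h2 with h | h
      · exact h
      · exact absurd hempty (Finset.ne_empty_of_mem
          (Finset.mem_filter.mpr ⟨Finset.mem_Icc.mpr ⟨h1, h2⟩, h⟩))
    have : ∀ ℓ ∈ Finset.Icc 1 N,
        (w ℓ - w (ℓ + 1)) * (1 - ∏ k ∈ Finset.Icc 1 ℓ, (1 - x k)) = 0 := by
      intro ℓ hℓ
      have hℓ' := Finset.mem_Icc.mp hℓ
      have : ∏ k ∈ Finset.Icc 1 ℓ, (1 - x k) = 1 := by
        apply Finset.prod_eq_one
        intro k hk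
        have hk' := Finset.mem_Icc.mp hk
        rw [hx0 k hk'.1 (by omega)]; ring
      rw [this]; ring
    rw [Finset.sum_eq_zero this]
    simp
end
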